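/- arXiv:2605.13684 — 4 statements merged into one kernel-verified Lean document; each statement's English description precedes it below -/
import Mathlib

section
/- Let F ⊆ [0,1]^X be a class of functions with γ⋆ = inf{γ > 0 : fat_γ(F) < ∞}. For every γ⁻ < γ⋆ and every n ∈ ℕ, there exists a real threshold r and points x₁,…,xₙ ∈ X such that {x₁,…,xₙ} is γ⁻-fat-shattered by F using the common threshold r for all n points (i.e., for every sign pattern b ∈ {±1}ⁿ there exists f ∈ F with f(xᵢ) ≥ r + γ⁻/2 when bᵢ = +1 and f(xᵢ) ≤ r − γ⁻/2 when bᵢ = −1). -/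
/-- `F` γ-fat-shatters the points `x` with thresholds `r`: every sign pattern is
realized with margin `γ/2` around the thresholds. -/
def Shatters {X : Type*} (F : Set (X → ℝ)) (γ : ℝ) {n : ℕ} (x : Fin n → X) (r : Fin n → ℝ) : Prop :=
  ∀ b : Fin n → Bool, ∃ f ∈ F, ∀ i,
    (b i = true → f (x i) ≥ r i + γ / 2) ∧ (b i = false → f (x i) ≤ r i - γ / 2)

/-- The γ-fat-shattering dimension of `F` is finite. -/
def FatFinite {X : Type*} (F : Set (X → ℝ)) (γ : ℝ) : Prop :=
  ∃ d : ℕ, ∀ n : ℕ, ∀ x : Fin n → X, ∀ r : Fin n → ℝ, Shatters F γ x r → n ≤ d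

/-- The γ-fat-shattering dimension of `F` equals `d`. -/
def IsFatDim {X : Type*} (F : Set (X → ℝ)) (γ : ℝ) (d : ℕ) : Prop :=
  (∃ x : Fin d → X, ∃ r : Fin d → ℝ, Shatters F γ x r) ∧
  (∀ n : ℕ, ∀ x : Fin n → X, ∀ r : Fin n → ℝ, Shatters F γ x r → n ≤ d)

/-- Common-threshold fat-shattering: for every `γ⁻ < γ⋆` (the critical fat-shattering
scale of `F ⊆ [0,1]^X`) and every `n`, some `n` points are `γ⁻`-fat-shattered by `F`
using one common threshold `r`. -/
theorem common_threshold_shattering {X : Type*} (F : Set (X → ℝ))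
    (hF : ∀ f ∈ F, ∀ x, f x ∈ Set.Icc (0:ℝ) 1)
    (γstar : ℝ) (hstar : γstar = sInf {γ : ℝ | 0 < γ ∧ FatFinite F γ})
    (γm : ℝ) (hγm0 : 0 < γm) (hγm : γm < γstar) (n : ℕ) :
    ∃ r : ℝ, ∃ x : Fin n → X, Shatters F γm x (fun _ => r) := by
  classical
  set γ' := (γm + γstar) / 2 with hγ'
  have hγ'1 : γm < γ' := by rw [hγ']; linarith
  have hγ'2 : γ' < γstar := by rw [hγ']; linarith
  have hγ'0 : 0 < γ' := lt_trans hγm0 hγ'1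
  have hnot : ¬ FatFinite F γ' := by
    intro h
    have hmem : γ' ∈ {γ : ℝ | 0 < γ ∧ FatFinite F γ} := ⟨hγ'0, h⟩
    have : γstar ≤ γ' := by
      rw [hstar]
      exact csInf_le ⟨0, fun y hy => le_of_lt hy.1⟩ hmem
    linarith
  set ε := (γ' - γm) / 2 with hε
  have hε0 : 0 < ε := by rw [hε]; linarith
  set K := ⌊1 / ε⌋₊ + 1 with hK
  rw [FatFinite] at hnot
  push_neg at hnot
  obtain ⟨m, x, r, hsh, hm⟩ := hnot (K * n)
  -- thresholds live in [γ'/2, 1 - γ'/2]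
  have hr : ∀ i, γ' / 2 ≤ r i ∧ r i ≤ 1 - γ' / 2 := by
    intro i
    obtain ⟨f, hfF, hf⟩ := hsh (fun _ => false)
    obtain ⟨g, hgF, hg⟩ := hsh (fun _ => true)
    have h1 := (hf i).2 rfl
    have h2 := (hg i).1 rfl
    have hf0 := (hF f hfF (x i)).1
    have hg1 := (hF g hgF (x i)).2
    constructor <;> linarith
  -- bucket map
  have hbound : ∀ i : Fin m, ⌊r i / ε⌋₊ < K := by
    intro i
    have h1 : r i ≤ 1 := by have := (hr i).2; linarith
    have : r i / ε ≤ 1 / ε := by gcongr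
    calc ⌊r i / ε⌋₊ ≤ ⌊1 / ε⌋₊ := Nat.floor_le_floor this
      _ < K := by omega
  set c : Fin m → Fin K := fun i => ⟨⌊r i / ε⌋₊, hbound i⟩ with hc
  have hcard : Fintype.card (Fin K) * n < Fintype.card (Fin m) := by
    simpa using hm
  obtain ⟨k, hk⟩ := Fintype.exists_lt_card_fiber_of_mul_lt_card c hcard
  set T := Finset.univ.filter fun i => c i = k with hT
  have hTn : n ≤ T.card := le_of_lt hk
  obtain ⟨S, hS, hScard⟩ := Finset.exists_subset_card_eq hTn
  set e := S.orderEmbOfFin hScard with he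
  have heT : ∀ i, (e i : Fin m) ∈ T := fun i => hS (S.orderEmbOfFin_mem hScard i)
  -- floor facts: for j in T, k*ε ≤ r j ≤ k*ε + ε
  have hfloor : ∀ j : Fin m, j ∈ T → (k : ℝ) * ε ≤ r j ∧ r j ≤ (k : ℝ) * ε + ε := by
    intro j hj
    have hck : c j = k := by
      simp only [hT, Finset.mem_filter] at hj; exact hj.2
    have hkval : (⌊r j / ε⌋₊ : ℝ) = (k : ℝ) := by
      have h := congrArg Fin.val hck
      simp only [hc] at h
      exact_mod_cast h
    have hrj0 : 0 ≤ r j / ε := div_nonneg (by linarith [(hr j).1]) hε0.le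
    have hlo : (⌊r j / ε⌋₊ : ℝ) ≤ r j / ε := Nat.floor_le hrj0
    have hhi : r j / ε < ⌊r j / ε⌋₊ + 1 := Nat.lt_floor_add_one _
    rw [hkval] at hlo hhi
    constructor
    · calc (k : ℝ) * ε ≤ (r j / ε) * ε := by nlinarith
        _ = r j := by field_simp
    · have : r j / ε * ε < ((k : ℝ) + 1) * ε := by nlinarith
      have hrj : r j < ((k : ℝ) + 1) * ε := by
        rwa [div_mul_cancel₀ _ (ne_of_gt hε0)] at this
      nlinarith
  refine ⟨(k : ℝ) * ε, fun i => x (e i), ?_⟩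
  intro b
  obtain ⟨f, hfF, hf⟩ := hsh (Function.extend (fun i => (e i : Fin m)) b (fun _ => false))
  have hinj : Function.Injective (fun i => (e i : Fin m)) := fun a b hab => e.injective hab
  refine ⟨f, hfF, fun i => ?_⟩
  have hext : Function.extend (fun i => (e i : Fin m)) b (fun _ => false) (e i) = b i :=
    hinj.extend_apply b _ i
  have hfi := hf (e i)
  rw [hext] at hfi
  obtain ⟨hlo, hhi⟩ := hfloor (e i) (heT i)
  constructor
  · intro hb
    have := hfi.1 hb
    have hε' : γ' / 2 = γm / 2 + ε := by rw [hε]; ring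
    simp only [ge_iff_le] at *
    linarith
  · intro hb
    have := hfi.2 hb
    have hε' : γ' / 2 = γm / 2 + ε := by rw [hε]; ring
    linarith
end

section
/- Let F ⊆ [−r/2, r/2]^X be a bounded function class on a finite domain X of size n > 1, let γ ∈ (0, r), and suppose fat_γ(F) = d > 0. Then the ℓ∞ covering number of F at scale (r + γ)/4 is at most n^{7d·log₂ n}; that is, there exist at most n^{7d·log₂ n} functions g : X → ℝ such that every f ∈ F is within ℓ∞ distance (r + γ)/4 of some g. -/
namespace CoverAux

variable {X : Type*}

/-! ### Sign-conditioned subclasses -/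

/-- Functions in `C` that are confidently positive at `x`. -/
def sPos (γ : ℝ) (C : Set (X → ℝ)) (x : X) : Set (X → ℝ) := {f ∈ C | γ / 2 ≤ f x}

/-- Functions in `C` that are confidently negative at `x`. -/
def sNeg (γ : ℝ) (C : Set (X → ℝ)) (x : X) : Set (X → ℝ) := {f ∈ C | f x ≤ -(γ / 2)}

lemma sPos_subset (γ : ℝ) (C : Set (X → ℝ)) (x : X) : sPos γ C x ⊆ C := fun _ hf => hf.1

lemma sNeg_subset (γ : ℝ) (C : Set (X → ℝ)) (x : X) : sNeg γ C x ⊆ C := fun _ hf => hf.1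

lemma sPos_mono {C C' : Set (X → ℝ)} (γ : ℝ) (x : X) (h : C ⊆ C') :
    sPos γ C x ⊆ sPos γ C' x := fun f hf => ⟨h hf.1, hf.2⟩

lemma sNeg_mono {C C' : Set (X → ℝ)} (γ : ℝ) (x : X) (h : C ⊆ C') :
    sNeg γ C x ⊆ sNeg γ C' x := fun f hf => ⟨h hf.1, hf.2⟩

/-! ### Binary trees -/

/-- Binary trees with inner nodes labeled by domain points. -/
inductive BT (X : Type*) : Type _ where
  | leaf : BT X
  | node : X → BT X → BT X → BT X

namespace BT

/-- Number of leaves. -/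
def lv : BT X → ℕ
  | leaf => 1
  | node _ l r => lv l + lv r

/-- Number of internal nodes. -/
def intern : BT X → ℕ
  | leaf => 0
  | node _ l r => intern l + intern r + 1

lemma lv_eq_intern : ∀ T : BT X, lv T = intern T + 1
  | leaf => rfl
  | node _ l r => by simp [lv, intern, lv_eq_intern l, lv_eq_intern r]; omega

end BT

/-- `C` realizes every sign-pattern on the list `S` with margin `γ/2`. -/
def Realz (γ : ℝ) (C : Set (X → ℝ)) (S : List X) : Prop :=
  ∀ p : X → Bool, ∃ f ∈ C, ∀ s ∈ S,
    (p s = true → γ / 2 ≤ f s) ∧ (p s = false → f s ≤ -(γ / 2))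

lemma Realz_mono {γ : ℝ} {C C' : Set (X → ℝ)} {S : List X} (h : C ⊆ C') :
    Realz γ C S → Realz γ C' S := fun hR p => by
  obtain ⟨f, hf, hs⟩ := hR p
  exact ⟨f, h hf, hs⟩

/-- `T` is an `S`-universally realized tree for the class `C`. -/
def Univ (γ : ℝ) : BT X → Set (X → ℝ) → List X → Prop
  | .leaf, C, S => Realz γ C S
  | .node x l r, C, S => Univ γ l (sPos γ C x) S ∧ Univ γ r (sNeg γ C x) S

lemma Univ_mono {γ : ℝ} : ∀ {T : BT X} {C C' : Set (X → ℝ)} {S : List X},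
    C ⊆ C' → Univ γ T C S → Univ γ T C' S
  | .leaf, _, _, _, h, hU => Realz_mono h hU
  | .node x l r, _, _, _, h, hU =>
    ⟨Univ_mono (sPos_mono γ x h) hU.1, Univ_mono (sNeg_mono γ x h) hU.2⟩

lemma Univ_realz {γ : ℝ} : ∀ {T : BT X} {C : Set (X → ℝ)} {S : List X},
    Univ γ T C S → Realz γ C S
  | .leaf, _, _, hU => hU
  | .node x _ _, C, _, hU => Realz_mono (sPos_subset γ C x) (Univ_realz hU.1)

lemma Univ_node_not_mem {γ : ℝ} (hγ : 0 < γ) {x : X} {l r : BT X} {C : Set (X → ℝ)}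
    {S : List X} (hU : Univ γ (.node x l r) C S) : x ∉ S := by
  intro hxS
  obtain ⟨f, hf, hs⟩ := Univ_realz hU.1 (fun _ => false)
  have h1 : γ / 2 ≤ f x := hf.2
  have h2 : f x ≤ -(γ / 2) := (hs x hxS).2 rfl
  linarith

/-! ### Minor trees -/

/-- Combine two optional trees into one (used for minor trees). -/
def comb : Option (BT X) → Option (BT X) → X → Option (BT X)
  | none, none, _ => none
  | some a, none, _ => some a
  | none, some b, _ => some b
  | some a, some b, x => some (.node x a b)

/-- The `y`-minor of a tree: contract to the occurrences of `y` (as leaves)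
and their divergence nodes. -/
def minor [DecidableEq X] : BT X → X → Option (BT X)
  | .leaf, _ => none
  | .node x l r, y => if y = x then some .leaf else comb (minor l y) (minor r y) x

/-- Leaves of an optional tree. -/
def mlv : Option (BT X) → ℕ
  | none => 0
  | some t => BT.lv t

lemma mlv_comb (o₁ o₂ : Option (BT X)) (x : X) :
    mlv (comb o₁ o₂ x) = mlv o₁ + mlv o₂ := by
  cases o₁ <;> cases o₂ <;> simp [comb, mlv, BT.lv]

/-- The tree avoids the point set `A` along each root-path (no repeats). -/
def AvoidB : BT X → Set X → Prop
  | .leaf, _ => True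
  | .node x l r, A => x ∉ A ∧ AvoidB l (insert x A) ∧ AvoidB r (insert x A)

lemma Avoid_anti : ∀ {T : BT X} {A B : Set X}, A ⊆ B → AvoidB T B → AvoidB T A
  | .leaf, _, _, _, _ => trivial
  | .node x l r, A, B, hAB, h =>
    ⟨fun hx => h.1 (hAB hx),
     Avoid_anti (Set.insert_subset_insert hAB) h.2.1,
     Avoid_anti (Set.insert_subset_insert hAB) h.2.2⟩

lemma minor_none_avoid [DecidableEq X] :
    ∀ {T : BT X} {A : Set X} {y : X}, AvoidB T A → y ∈ A → minor T y = none
  | .leaf, _, _, _, _ => rfl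
  | .node x l r, A, y, h, hy => by
    have hxy : y ≠ x := fun he => h.1 (he ▸ hy)
    have h1 := minor_none_avoid h.2.1 (Set.mem_insert_of_mem x hy)
    have h2 := minor_none_avoid h.2.2 (Set.mem_insert_of_mem x hy)
    simp [minor, hxy, h1, h2, comb]

lemma minor_none_mem [DecidableEq X] {γ : ℝ} (hγ : 0 < γ) :
    ∀ {T : BT X} {C : Set (X → ℝ)} {S : List X} {y : X},
      Univ γ T C S → y ∈ S → minor T y = none
  | .leaf, _, _, _, _, _ => rfl
  | .node x l r, C, S, y, hU, hy => by
    have hxy : y ≠ x := fun he => Univ_node_not_mem hγ hU (he ▸ hy)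
    have h1 := minor_none_mem hγ hU.1 hy
    have h2 := minor_none_mem hγ hU.2 hy
    simp [minor, hxy, h1, h2, comb]

lemma minor_univ [DecidableEq X] {γ : ℝ} :
    ∀ {T : BT X} {C : Set (X → ℝ)} {S : List X} {y : X} {M : BT X},
      Univ γ T C S → minor T y = some M → Univ γ M C (y :: S)
  | .leaf, _, _, _, _, _, hm => by simp [minor] at hm
  | .node x l r, C, S, y, M, hU, hm => by
    by_cases hyx : y = x
    · subst hyx
      rw [minor, if_pos rfl] at hm
      obtain rfl : BT.leaf = M := by injection hm
      intro p
      cases hp : p y with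
      | true =>
        obtain ⟨f, hf, hs⟩ := Univ_realz hU.1 p
        refine ⟨f, hf.1, fun s hsmem => ?_⟩
        rcases List.mem_cons.1 hsmem with rfl | hsS
        · exact ⟨fun _ => hf.2, fun hfalse => absurd hfalse (by simp [hp])⟩
        · exact hs s hsS
      | false =>
        obtain ⟨f, hf, hs⟩ := Univ_realz hU.2 p
        refine ⟨f, hf.1, fun s hsmem => ?_⟩
        rcases List.mem_cons.1 hsmem with rfl | hsS
        · exact ⟨fun htrue => absurd htrue (by simp [hp]), fun _ => hf.2⟩
        · exact hs s hsS
    · rw [minor, if_neg hyx] at hm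
      rcases h1 : minor l y with _ | a <;> rcases h2 : minor r y with _ | b <;>
        rw [h1, h2] at hm
      · simp [comb] at hm
      · obtain rfl : b = M := by simpa [comb] using hm
        exact Univ_mono (sNeg_subset γ C x) (minor_univ hU.2 h2)
      · obtain rfl : a = M := by simpa [comb] using hm
        exact Univ_mono (sPos_subset γ C x) (minor_univ hU.1 h1)
      · obtain rfl : BT.node x a b = M := by simpa [comb] using hm
        exact ⟨minor_univ hU.1 h1, minor_univ hU.2 h2⟩

lemma minor_avoid [DecidableEq X] :
    ∀ {T : BT X} {A : Set X} {y : X} {M : BT X},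
      AvoidB T A → minor T y = some M → AvoidB M A
  | .leaf, _, _, _, _, hm => by simp [minor] at hm
  | .node x l r, A, y, M, hA, hm => by
    by_cases hyx : y = x
    · rw [minor, if_pos hyx] at hm
      obtain rfl : BT.leaf = M := by injection hm
      trivial
    · rw [minor, if_neg hyx] at hm
      rcases h1 : minor l y with _ | a <;> rcases h2 : minor r y with _ | b <;>
        rw [h1, h2] at hm
      · simp [comb] at hm
      · obtain rfl : b = M := by simpa [comb] using hm
        exact Avoid_anti (Set.subset_insert x A) (minor_avoid hA.2.2 h2)
      · obtain rfl : a = M := by simpa [comb] using hm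
        exact Avoid_anti (Set.subset_insert x A) (minor_avoid hA.2.1 h1)
      · obtain rfl : BT.node x a b = M := by simpa [comb] using hm
        exact ⟨hA.1, minor_avoid hA.2.1 h1, minor_avoid hA.2.2 h2⟩

lemma intern_sum [Fintype X] [DecidableEq X] :
    ∀ (T : BT X) (A : Set X), AvoidB T A →
      BT.intern T = ∑ y : X, mlv (minor T y)
  | .leaf, _, _ => by simp [BT.intern, minor, mlv]
  | .node x l r, A, hA => by
    have h1 : minor l x = none := minor_none_avoid hA.2.1 (Set.mem_insert x A)
    have h2 : minor r x = none := minor_none_avoid hA.2.2 (Set.mem_insert x A)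
    have key : ∀ y : X, mlv (minor (BT.node x l r) y) =
        (mlv (minor l y) + mlv (minor r y)) + (if y = x then 1 else 0) := by
      intro y
      by_cases hyx : y = x
      · subst hyx
        simp [minor, mlv, h1, h2, BT.lv]
      · simp [minor, hyx, mlv_comb]
    calc BT.intern (BT.node x l r) = BT.intern l + BT.intern r + 1 := rfl
      _ = (∑ y : X, mlv (minor l y)) + (∑ y : X, mlv (minor r y)) +
            (∑ y : X, if y = x then 1 else 0) := by
          rw [intern_sum l _ hA.2.1, intern_sum r _ hA.2.2, Finset.sum_ite_eq'
            Finset.univ x (fun _ => 1)]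
          simp
      _ = ∑ y : X, mlv (minor (BT.node x l r) y) := by
          rw [← Finset.sum_add_distrib, ← Finset.sum_add_distrib]
          exact (Finset.sum_congr rfl fun y _ => (key y).symm)

/-! ### The counting bound -/

/-- `Nf n e = 1 + n + n² + ⋯ + n^(e-1)`. -/
def Nf (n : ℕ) : ℕ → ℕ
  | 0 => 0
  | (e + 1) => 1 + n * Nf n e

lemma count [Fintype X] [DecidableEq X] {F : Set (X → ℝ)} {γ : ℝ} (hγ : 0 < γ) {d n : ℕ}
    (hX : Fintype.card X = n)
    (hfat2 : ∀ m : ℕ, ∀ x : Fin m → X, ∀ rr : Fin m → ℝ, Shatters F γ x rr → m ≤ d) :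
    ∀ (e : ℕ) (S : List X) (C : Set (X → ℝ)) (T : BT X) (A : Set X),
      C ⊆ F → S.Nodup → d + 1 ≤ S.length + e → Univ γ T C S → AvoidB T A →
      BT.lv T ≤ Nf n e := by
  intro e
  induction e with
  | zero =>
    intro S C T A hCF hnd hlen hU _
    exfalso
    have hR : Realz γ C S := Univ_realz hU
    have hle : S.length ≤ d := by
      apply hfat2 S.length (fun i => S.get i) (fun _ => 0)
      intro b
      classical
      obtain ⟨f, hfC, hf⟩ := hR (fun z =>
        if h : ∃ i : Fin S.length, S.get i = z then b h.choose else true)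
      refine ⟨f, hCF hfC, fun i => ?_⟩
      have hmem : S.get i ∈ S := List.get_mem S i
      have hpi : (if h : ∃ j : Fin S.length, S.get j = S.get i then b h.choose else true)
          = b i := by
        have hex : ∃ j : Fin S.length, S.get j = S.get i := ⟨i, rfl⟩
        rw [dif_pos hex]
        congr 1
        exact (List.Nodup.get_inj_iff hnd).1 hex.choose_spec
      have h2 := hf _ hmem
      rw [hpi] at h2
      constructor
      · intro hb
        have := h2.1 hb
        simp only [ge_iff_le]
        linarith
      · intro hb
        have := h2.2 hb
        linarith
    omega
  | succ e ih =>
    intro S C T A hCF hnd hlen hU hA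
    have h1 : BT.lv T = (∑ y : X, mlv (minor T y)) + 1 := by
      rw [BT.lv_eq_intern, intern_sum T A hA]
    have h2 : ∀ y : X, mlv (minor T y) ≤ Nf n e := by
      intro y
      rcases hm : minor T y with _ | M
      · simp [mlv]
      · have hyS : y ∉ S := by
          intro hy
          rw [minor_none_mem hγ hU hy] at hm
          cases hm
        have := ih (y :: S) C M A hCF (List.nodup_cons.mpr ⟨hyS, hnd⟩)
          (by simp only [List.length_cons]; omega)
          (minor_univ hU hm) (minor_avoid hA hm)
        simpa [mlv] using this
    calc BT.lv T = (∑ y : X, mlv (minor T y)) + 1 := h1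
      _ ≤ (∑ _y : X, Nf n e) + 1 := by
          gcongr with y _
          exact h2 y
      _ = n * Nf n e + 1 := by
          rw [Finset.sum_const, Finset.card_univ, hX, smul_eq_mul]
      _ ≤ Nf n (e + 1) := by
          simp only [Nf]
          omega

/-! ### Shattered trees (Littlestone structures) -/

/-- `C` admits a complete sign-shattered tree of depth `k`. -/
def HT (γ : ℝ) : ℕ → Set (X → ℝ) → Prop
  | 0, C => C.Nonempty
  | (k + 1), C => ∃ x : X, HT γ k (sPos γ C x) ∧ HT γ k (sNeg γ C x)

lemma ht_nonempty {γ : ℝ} : ∀ {k : ℕ} {C : Set (X → ℝ)}, HT γ k C → C.Nonempty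
  | 0, _, h => h
  | (k + 1), C, h => by
    obtain ⟨x, h1, _⟩ := h
    obtain ⟨f, hf⟩ := ht_nonempty h1
    exact ⟨f, hf.1⟩

lemma ht_succ {γ : ℝ} : ∀ {k : ℕ} {C : Set (X → ℝ)}, HT γ (k + 1) C → HT γ k C
  | 0, C, h => by
    obtain ⟨x, h1, _⟩ := h
    obtain ⟨f, hf⟩ := h1
    exact ⟨f, hf.1⟩
  | (k + 1), C, h => by
    obtain ⟨x, h1, h2⟩ := h
    exact ⟨x, ht_succ h1, ht_succ h2⟩

lemma ht_mono {γ : ℝ} {j k : ℕ} {C : Set (X → ℝ)} (hjk : j ≤ k) (h : HT γ k C) :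
    HT γ j C := by
  induction hjk with
  | refl => exact h
  | step _ ih => exact ih (ht_succ h)

/-- Extraction: a shattered tree of depth `k` yields a universally realized tree
with `2^k` leaves avoiding any context `A` on which signs are already pinned. -/
lemma ht_tree {γ : ℝ} (hγ : 0 < γ) :
    ∀ (k : ℕ) (C : Set (X → ℝ)) (A : Set X),
      (∀ x ∈ A, (∀ f ∈ C, γ / 2 ≤ f x) ∨ (∀ f ∈ C, f x ≤ -(γ / 2))) →
      HT γ k C →
      ∃ T : BT X, Univ γ T C [] ∧ AvoidB T A ∧ BT.lv T = 2 ^ k := by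
  intro k
  induction k with
  | zero =>
    intro C A _ h
    refine ⟨.leaf, ?_, trivial, rfl⟩
    intro p
    obtain ⟨f, hf⟩ := h
    exact ⟨f, hf, fun s hs => by cases hs⟩
  | succ k ih =>
    intro C A hCtx h
    obtain ⟨x, h1, h2⟩ := h
    have hxA : x ∉ A := by
      intro hxmem
      rcases hCtx x hxmem with hall | hall
      · obtain ⟨f, hf⟩ := ht_nonempty h2
        have := hall f hf.1
        have := hf.2
        linarith
      · obtain ⟨f, hf⟩ := ht_nonempty h1
        have := hall f hf.1
        have := hf.2
        linarith
    obtain ⟨T₀, u0, a0, l0⟩ := ih (sPos γ C x) (insert x A) (by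
      intro y hy
      rcases Set.mem_insert_iff.1 hy with rfl | hyA
      · exact Or.inl (fun f hf => hf.2)
      · exact (hCtx y hyA).imp (fun hh f hf => hh f hf.1) (fun hh f hf => hh f hf.1)) h1
    obtain ⟨T₁, u1, a1, l1⟩ := ih (sNeg γ C x) (insert x A) (by
      intro y hy
      rcases Set.mem_insert_iff.1 hy with rfl | hyA
      · exact Or.inr (fun f hf => hf.2)
      · exact (hCtx y hyA).imp (fun hh f hf => hh f hf.1) (fun hh f hf => hh f hf.1)) h2
    refine ⟨.node x T₀ T₁, ⟨u0, u1⟩, ⟨hxA, a0, a1⟩, ?_⟩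
    show BT.lv T₀ + BT.lv T₁ = 2 ^ (k + 1)
    rw [l0, l1, pow_succ]
    omega

/-- The key counting bound: shattered trees of depth `k` force `2^k ≤ Nf n (d+1)`. -/
lemma ht_key [Fintype X] {F : Set (X → ℝ)} {γ : ℝ} (hγ : 0 < γ) {d n : ℕ}
    (hX : Fintype.card X = n)
    (hfat2 : ∀ m : ℕ, ∀ x : Fin m → X, ∀ rr : Fin m → ℝ, Shatters F γ x rr → m ≤ d)
    {k : ℕ} {C : Set (X → ℝ)} (hCF : C ⊆ F) (h : HT γ k C) :
    2 ^ k ≤ Nf n (d + 1) := by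
  classical
  obtain ⟨T, hu, ha, hl⟩ := ht_tree hγ k C ∅ (fun x hx => absurd hx (Set.notMem_empty x)) h
  have := count hγ hX hfat2 (d + 1) [] C T ∅ hCF List.nodup_nil (by simp) hu ha
  omega

lemma ht_le [Fintype X] {F : Set (X → ℝ)} {γ : ℝ} (hγ : 0 < γ) {d n : ℕ}
    (hX : Fintype.card X = n)
    (hfat2 : ∀ m : ℕ, ∀ x : Fin m → X, ∀ rr : Fin m → ℝ, Shatters F γ x rr → m ≤ d)
    {k : ℕ} {C : Set (X → ℝ)} (hCF : C ⊆ F) (h : HT γ k C) :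
    k ≤ Nf n (d + 1) := by
  have h1 : k < 2 ^ k := Nat.lt_two_pow_self
  have h2 := ht_key hγ hX hfat2 hCF h
  omega

/-! ### The SOA-style disambiguation family -/

open Classical in
/-- The Littlestone-type potential (largest shattered-tree depth, capped at `K`). -/
noncomputable def Ld (γ : ℝ) (K : ℕ) (C : Set (X → ℝ)) : ℕ :=
  Nat.findGreatest (fun k => HT γ k C) K

open Classical in
lemma ld_spec {γ : ℝ} {K : ℕ} {C : Set (X → ℝ)} (h : Ld γ K C ≠ 0) :
    HT γ (Ld γ K C) C := by
  rw [Ld] at h ⊢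
  exact Nat.findGreatest_of_ne_zero rfl h

open Classical in
lemma ld_ge {γ : ℝ} {K : ℕ} {C : Set (X → ℝ)} {k : ℕ} (hk : k ≤ K) (h : HT γ k C) :
    k ≤ Ld γ K C := by
  rw [Ld]
  exact Nat.le_findGreatest hk h

open Classical in
/-- The SOA prediction function for class `C`. -/
noncomputable def bPred (γ : ℝ) (K : ℕ) (C : Set (X → ℝ)) : X → Bool := fun x =>
  if HT γ (Ld γ K C) (sPos γ C x) then true else false

open Classical in
/-- The mistake-driven disambiguation family. -/
noncomputable def Bs [Fintype X] (γ : ℝ) (K : ℕ) : ℕ → Set (X → ℝ) → Finset (X → Bool)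
  | 0, C => {bPred γ K C}
  | (m + 1), C => insert (bPred γ K C)
      (Finset.univ.biUnion fun x : X =>
        Bs γ K m (sPos γ C x) ∪ Bs γ K m (sNeg γ C x))

/-- `Qf n m` bounds the size of `Bs _ _ m _`. -/
def Qf (n : ℕ) : ℕ → ℕ
  | 0 => 1
  | (m + 1) => 1 + 2 * n * Qf n m

open Classical in
lemma bs_card [Fintype X] {n : ℕ} (hX : Fintype.card X = n) (γ : ℝ) (K : ℕ) :
    ∀ (m : ℕ) (C : Set (X → ℝ)), (Bs γ K m C).card ≤ Qf n m := by
  intro m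
  induction m with
  | zero => intro C; simp [Bs, Qf]
  | succ m ih =>
    intro C
    calc (Bs γ K (m + 1) C).card
        ≤ (Finset.univ.biUnion fun x : X =>
            Bs γ K m (sPos γ C x) ∪ Bs γ K m (sNeg γ C x)).card + 1 := by
          rw [Bs]
          exact Finset.card_insert_le _ _
      _ ≤ (∑ x : X, (Bs γ K m (sPos γ C x) ∪ Bs γ K m (sNeg γ C x)).card) + 1 := by
          gcongr
          exact Finset.card_biUnion_le
      _ ≤ (∑ _x : X, (Qf n m + Qf n m)) + 1 := by
          gcongr with x _
          calc (Bs γ K m (sPos γ C x) ∪ Bs γ K m (sNeg γ C x)).card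
              ≤ (Bs γ K m (sPos γ C x)).card + (Bs γ K m (sNeg γ C x)).card :=
                Finset.card_union_le _ _
            _ ≤ Qf n m + Qf n m := by gcongr <;> exact ih _
      _ = n * (Qf n m + Qf n m) + 1 := by
          rw [Finset.sum_const, Finset.card_univ, hX, smul_eq_mul]
      _ ≤ Qf n (m + 1) := by
          have h : n * (Qf n m + Qf n m) = 2 * n * Qf n m := by ring
          simp only [Qf]
          omega

/-- Consistency of a Boolean function with the confident signs of `f₀`. -/
def Consist (γ : ℝ) (β : X → Bool) (f₀ : X → ℝ) : Prop :=
  ∀ x, (γ / 2 ≤ f₀ x → β x = true) ∧ (f₀ x ≤ -(γ / 2) → β x = false)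

open Classical in
lemma bs_mem_self [Fintype X] (γ : ℝ) (K : ℕ) (m : ℕ) (C : Set (X → ℝ)) :
    bPred γ K C ∈ Bs γ K m C := by
  cases m with
  | zero => simp [Bs]
  | succ m => simp [Bs]

open Classical in
lemma bs_mem_pos [Fintype X] (γ : ℝ) (K : ℕ) (m : ℕ) (C : Set (X → ℝ)) (x : X)
    {β : X → Bool} (h : β ∈ Bs γ K m (sPos γ C x)) : β ∈ Bs γ K (m + 1) C := by
  rw [Bs]
  apply Finset.mem_insert_of_mem
  apply Finset.mem_biUnion.2
  exact ⟨x, Finset.mem_univ x, Finset.mem_union_left _ h⟩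

open Classical in
lemma bs_mem_neg [Fintype X] (γ : ℝ) (K : ℕ) (m : ℕ) (C : Set (X → ℝ)) (x : X)
    {β : X → Bool} (h : β ∈ Bs γ K m (sNeg γ C x)) : β ∈ Bs γ K (m + 1) C := by
  rw [Bs]
  apply Finset.mem_insert_of_mem
  apply Finset.mem_biUnion.2
  exact ⟨x, Finset.mem_univ x, Finset.mem_union_right _ h⟩

open Classical in
/-- Coverage: every member of a class of potential at most `m` is consistently
disambiguated by a member of `Bs γ K m C`. -/
lemma bs_cover [Fintype X] {F : Set (X → ℝ)} {γ : ℝ} (hγ : 0 < γ) {K : ℕ}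
    (hK1 : 1 ≤ K)
    (hKb : ∀ (C : Set (X → ℝ)), C ⊆ F → ∀ k, HT γ k C → k ≤ K) :
    ∀ (m : ℕ) (C : Set (X → ℝ)), C ⊆ F → Ld γ K C ≤ m →
      ∀ f₀ ∈ C, ∃ β ∈ Bs γ K m C, Consist γ β f₀ := by
  intro m
  induction m with
  | zero =>
    intro C hCF hLd f₀ hf₀
    refine ⟨bPred γ K C, bs_mem_self γ K 0 C, ?_⟩
    intro x
    have hLd0 : Ld γ K C = 0 := Nat.le_zero.1 hLd
    constructor
    · intro hpos
      have hmem : f₀ ∈ sPos γ C x := ⟨hf₀, hpos⟩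
      have hht : HT γ (Ld γ K C) (sPos γ C x) := by
        rw [hLd0]; exact ⟨f₀, hmem⟩
      simp [bPred, hht]
    · intro hneg
      have hmem : f₀ ∈ sNeg γ C x := ⟨hf₀, hneg⟩
      by_cases hht : HT γ (Ld γ K C) (sPos γ C x)
      · exfalso
        rw [hLd0] at hht
        have h1 : HT γ 1 C := ⟨x, hht, ⟨f₀, hmem⟩⟩
        have := ld_ge hK1 h1
        omega
      · simp [bPred, hht]
  | succ m ih =>
    intro C hCF hLd f₀ hf₀
    by_cases hcons : Consist γ (bPred γ K C) f₀
    · exact ⟨bPred γ K C, bs_mem_self γ K (m + 1) C, hcons⟩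
    · rw [Consist] at hcons
      obtain ⟨x, hx⟩ := not_forall.mp hcons
      rcases not_and_or.mp hx with hx | hx
      · -- positive mistake: f₀ is confidently positive but prediction is false
        push_neg at hx
        obtain ⟨hpos, hnt⟩ := hx
        have hmem : f₀ ∈ sPos γ C x := ⟨hf₀, hpos⟩
        have hht : ¬ HT γ (Ld γ K C) (sPos γ C x) := by
          intro h; exact hnt (by simp [bPred, h])
        have hLdpos : 0 < Ld γ K C := by
          rcases Nat.eq_zero_or_pos (Ld γ K C) with h0 | h
          · exfalso; rw [h0] at hht; exact hht ⟨f₀, hmem⟩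
          · exact h
        have hdrop : Ld γ K (sPos γ C x) < Ld γ K C := by
          by_contra hge
          push_neg at hge
          have h0 : 0 < Ld γ K (sPos γ C x) := lt_of_lt_of_le hLdpos hge
          have hspec : HT γ (Ld γ K (sPos γ C x)) (sPos γ C x) :=
            ld_spec (Nat.pos_iff_ne_zero.1 h0)
          exact hht (ht_mono hge hspec)
        have hle : Ld γ K (sPos γ C x) ≤ m := by omega
        obtain ⟨β, hβmem, hβcons⟩ := ih (sPos γ C x)
          ((sPos_subset γ C x).trans hCF) hle f₀ hmem
        exact ⟨β, bs_mem_pos γ K m C x hβmem, hβcons⟩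
      · -- negative mistake: f₀ is confidently negative but prediction is true
        push_neg at hx
        obtain ⟨hneg, hnf⟩ := hx
        have hmem : f₀ ∈ sNeg γ C x := ⟨hf₀, hneg⟩
        have hht : HT γ (Ld γ K C) (sPos γ C x) := by
          by_contra h
          exact hnf (by simp [bPred, h])
        have hLdpos : 0 < Ld γ K C := by
          rcases Nat.eq_zero_or_pos (Ld γ K C) with h0 | h
          · exfalso
            rw [h0] at hht
            have h1 : HT γ 1 C := ⟨x, hht, ⟨f₀, hmem⟩⟩
            have := ld_ge hK1 h1
            omega
          · exact h
        have hdrop : Ld γ K (sNeg γ C x) < Ld γ K C := by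
          by_contra hge
          push_neg at hge
          have h0 : 0 < Ld γ K (sNeg γ C x) := lt_of_lt_of_le hLdpos hge
          have hspec : HT γ (Ld γ K (sNeg γ C x)) (sNeg γ C x) :=
            ld_spec (Nat.pos_iff_ne_zero.1 h0)
          have hneg' : HT γ (Ld γ K C) (sNeg γ C x) := ht_mono hge hspec
          have hsucc : HT γ (Ld γ K C + 1) C := ⟨x, hht, hneg'⟩
          have hKle : Ld γ K C + 1 ≤ K := hKb C hCF _ hsucc
          have := ld_ge hKle hsucc
          omega
        have hle : Ld γ K (sNeg γ C x) ≤ m := by omega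
        obtain ⟨β, hβmem, hβcons⟩ := ih (sNeg γ C x)
          ((sNeg_subset γ C x).trans hCF) hle f₀ hmem
        exact ⟨β, bs_mem_neg γ K m C x hβmem, hβcons⟩

/-! ### Numeric helpers -/

lemma Nf_le {n : ℕ} (hn : 2 ≤ n) : ∀ d : ℕ, Nf n (d + 1) + 1 ≤ 2 * n ^ d := by
  intro d
  induction d with
  | zero => simp [Nf]
  | succ d ih =>
    have key : n * Nf n (d + 1) + n ≤ 2 * n ^ (d + 1) := by
      calc n * Nf n (d + 1) + n = n * (Nf n (d + 1) + 1) := by ring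
        _ ≤ n * (2 * n ^ d) := Nat.mul_le_mul_left n ih
        _ = 2 * n ^ (d + 1) := by rw [pow_succ]; ring
    have hNf : Nf n (d + 1 + 1) = 1 + n * Nf n (d + 1) := rfl
    omega

lemma Qf_le {n : ℕ} (hn : 1 ≤ n) : ∀ m : ℕ, Qf n m + 1 ≤ 2 * (2 * n) ^ m := by
  intro m
  induction m with
  | zero => simp [Qf]
  | succ m ih =>
    have key : 2 * n * Qf n m + 2 * n ≤ 2 * (2 * n) ^ (m + 1) := by
      calc 2 * n * Qf n m + 2 * n = 2 * n * (Qf n m + 1) := by ring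
        _ ≤ 2 * n * (2 * (2 * n) ^ m) := Nat.mul_le_mul_left (2 * n) ih
        _ = 2 * (2 * n) ^ (m + 1) := by rw [pow_succ]; ring
    have hQf : Qf n (m + 1) = 1 + 2 * n * Qf n m := rfl
    omega

end CoverAux

open CoverAux in
/-- Single-step covering lemma: if `F ⊆ [-r/2, r/2]^X` on a finite domain of size
`n > 1` has `fat_γ(F) = d > 0`, then `F` has an ℓ∞ cover at scale `(r+γ)/4` of size
at most `n^(7 d log₂ n)`. -/
theorem covering_base {X : Type*} [Fintype X] (n : ℕ) (hn : 1 < n)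
    (hX : Fintype.card X = n) (r γ : ℝ) (hγ : γ ∈ Set.Ioo 0 r)
    (F : Set (X → ℝ)) (hF : ∀ f ∈ F, ∀ x, f x ∈ Set.Icc (-(r/2)) (r/2))
    (d : ℕ) (hd : 0 < d) (hfat : IsFatDim F γ d) :
    ∃ G : Finset (X → ℝ), (G.card : ℝ) ≤ (n : ℝ) ^ (7 * (d : ℝ) * Real.logb 2 n) ∧
      ∀ f ∈ F, ∃ g ∈ G, ∀ x, |f x - g x| ≤ (r + γ) / 4 := by
  classical
  obtain ⟨hγ0, hγr⟩ := hγ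
  set K : ℕ := Nf n (d + 1) with hKdef
  have hK1 : 1 ≤ K := by
    rw [hKdef]
    simp only [Nf]
    omega
  have hKb : ∀ (C : Set (X → ℝ)), C ⊆ F → ∀ k, HT γ k C → k ≤ K :=
    fun C hCF k h => ht_le hγ0 hX hfat.2 hCF h
  set emb : (X → Bool) → (X → ℝ) :=
    fun β x => if β x then (r - γ) / 4 else -((r - γ) / 4) with hembdef
  refine ⟨(Bs γ K (Ld γ K F) F).image emb, ?_, ?_⟩
  · -- cardinality bound
    have hcard1 : ((Bs γ K (Ld γ K F) F).image emb).card ≤ Qf n (Ld γ K F) :=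
      le_trans (Finset.card_image_le) (bs_card hX γ K (Ld γ K F) F)
    have hcard2 : Qf n (Ld γ K F) ≤ 2 * (2 * n) ^ (Ld γ K F) := by
      have := Qf_le (n := n) (by omega) (Ld γ K F)
      omega
    -- 2^M ≤ 2 n^d
    have hM2 : 2 ^ (Ld γ K F) ≤ 2 * n ^ d := by
      rcases Nat.eq_zero_or_pos (Ld γ K F) with h0 | hMpos
      · rw [h0]
        have : 1 ≤ n ^ d := Nat.one_le_pow _ _ (by omega)
        omega
      · have hspec : HT γ (Ld γ K F) F := ld_spec (Nat.pos_iff_ne_zero.1 hMpos)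
        have hkey := ht_key hγ0 hX hfat.2 (le_refl F) hspec
        have hNf := Nf_le (n := n) (by omega) d
        have hKeq := hKdef
        omega
    -- now real arithmetic
    have hn2 : (2 : ℝ) ≤ (n : ℝ) := by exact_mod_cast hn
    have hnpos : (0 : ℝ) < (n : ℝ) := by linarith
    set Λ : ℝ := Real.logb 2 n with hΛdef
    have hΛ1 : 1 ≤ Λ := by
      rw [hΛdef]
      rw [Real.le_logb_iff_rpow_le one_lt_two hnpos]
      rw [Real.rpow_one]
      exact hn2
    have hD1 : (1 : ℝ) ≤ (d : ℝ) := by exact_mod_cast hd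
    -- M ≤ 1 + d Λ
    have hMr : ((Ld γ K F : ℕ) : ℝ) ≤ 1 + (d : ℝ) * Λ := by
      have hcast : (2 : ℝ) ^ ((Ld γ K F : ℕ) : ℝ) ≤ 2 * (n : ℝ) ^ (d : ℕ) := by
        rw [Real.rpow_natCast]
        exact_mod_cast hM2
      have h2 : ((Ld γ K F : ℕ) : ℝ) ≤ Real.logb 2 (2 * (n : ℝ) ^ (d : ℕ)) := by
        rw [Real.le_logb_iff_rpow_le one_lt_two (by positivity)]
        exact hcast
      calc ((Ld γ K F : ℕ) : ℝ) ≤ Real.logb 2 (2 * (n : ℝ) ^ (d : ℕ)) := h2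
        _ = Real.logb 2 2 + Real.logb 2 ((n : ℝ) ^ (d : ℕ)) := by
            rw [Real.logb_mul (by norm_num) (by positivity)]
        _ = 1 + (d : ℝ) * Λ := by
            rw [Real.logb_self_eq_one one_lt_two, Real.logb_pow]
    -- chain
    have hfin : (2 : ℝ) * ((2 * n : ℕ) : ℝ) ^ (Ld γ K F : ℕ) ≤ (n : ℝ) ^ (7 * (d : ℝ) * Λ) := by
      have h2n : ((2 * n : ℕ) : ℝ) = (2 : ℝ) ^ (1 + Λ) := by
        rw [Real.rpow_add two_pos, Real.rpow_one, hΛdef,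
          Real.rpow_logb two_pos (by norm_num) hnpos]
        push_cast
        ring
      have hlhs : (2 : ℝ) * ((2 * n : ℕ) : ℝ) ^ (Ld γ K F : ℕ) =
          (2 : ℝ) ^ (1 + (1 + Λ) * ((Ld γ K F : ℕ) : ℝ)) := by
        rw [h2n, ← Real.rpow_natCast ((2:ℝ) ^ (1 + Λ)) (Ld γ K F), ← Real.rpow_mul (by norm_num),
          Real.rpow_add two_pos, Real.rpow_one]
      have hrhs : (n : ℝ) ^ (7 * (d : ℝ) * Λ) = (2 : ℝ) ^ (Λ * (7 * (d : ℝ) * Λ)) := by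
        conv_rhs => rw [Real.rpow_mul (by norm_num : (0:ℝ) ≤ 2)]
        rw [hΛdef, Real.rpow_logb two_pos (by norm_num) hnpos]
      rw [hlhs, hrhs, Real.rpow_le_rpow_left_iff one_lt_two]
      -- 1 + (1+Λ) M ≤ Λ (7 d Λ)
      have hstep : (1 + Λ) * ((Ld γ K F : ℕ) : ℝ) ≤ (1 + Λ) * (1 + (d : ℝ) * Λ) := by
        apply mul_le_mul_of_nonneg_left hMr
        linarith
      have hΛ0 : (0:ℝ) ≤ Λ := by linarith
      have hD0 : (0:ℝ) ≤ (d : ℝ) := by linarith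
      have e1 : Λ ≤ (d : ℝ) * Λ ^ 2 := by nlinarith
      have e2 : (d : ℝ) * Λ ≤ (d : ℝ) * Λ ^ 2 := by nlinarith
      have e3 : (1:ℝ) ≤ (d : ℝ) * Λ ^ 2 := by nlinarith
      nlinarith [hstep, e1, e2, e3]
    calc (((Bs γ K (Ld γ K F) F).image emb).card : ℝ) ≤ (Qf n (Ld γ K F) : ℝ) := by exact_mod_cast hcard1
      _ ≤ ((2 * (2 * n) ^ (Ld γ K F) : ℕ) : ℝ) := by exact_mod_cast hcard2
      _ = (2 : ℝ) * ((2 * n : ℕ) : ℝ) ^ (Ld γ K F : ℕ) := by push_cast; ring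
      _ ≤ (n : ℝ) ^ (7 * (d : ℝ) * Real.logb 2 n) := hfin
  · -- coverage
    intro f hf
    obtain ⟨β, hβmem, hβcons⟩ := bs_cover hγ0 hK1 hKb (Ld γ K F) F (le_refl F) (le_refl _) f hf
    refine ⟨emb β, Finset.mem_image_of_mem emb hβmem, ?_⟩
    intro x
    have hbd := hF f hf x
    rw [Set.mem_Icc] at hbd
    obtain ⟨hlow, hhigh⟩ := hbd
    cases hcase : β x with
    | false =>
      have hnotpos : ¬ (γ / 2 ≤ f x) := by
        intro hpos
        have := (hβcons x).1 hpos
        rw [hcase] at this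
        cases this
      push_neg at hnotpos
      have hge : emb β x = -((r - γ) / 4) := by simp [hembdef, hcase]
      rw [hge, abs_le]
      constructor <;> linarith
    | true =>
      have hnotneg : ¬ (f x ≤ -(γ / 2)) := by
        intro hneg
        have := (hβcons x).2 hneg
        rw [hcase] at this
        cases this
      push_neg at hnotneg
      have hge : emb β x = (r - γ) / 4 := by simp [hembdef, hcase]
      rw [hge, abs_le]
      constructor <;> linarith
end

section
/- Suppose F ⊆ [−R, R]^X admits a γ-sample compression scheme of size k in which the reconstructed functions take values in an ε-discretized grid of [−R, R] (at most 2R/ε values per point). Then for every finite set of n points, F admits an ℓ∞ γ-cover of size at most (2Rn/ε)^k; in particular H(F, γ, n) = O(k log n). -/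
/-- A γ-sample compression scheme of size `k` whose labels lie in an ε-grid `V` of
`[-R,R]` (with at most `2R/ε` values) yields, on any set of `n ≥ 1` points, an
ℓ∞ γ-cover of size at most `(2Rn/ε)^k`; in particular `H(F,γ,n) = O(k log n)`. -/
theorem compression_gives_cover {X : Type*} (R γ ε : ℝ) (hR : 0 < R) (hε : 0 < ε)
    (k : ℕ) (F : Set (X → ℝ)) (hF : ∀ f ∈ F, ∀ x, f x ∈ Set.Icc (-R) R)
    (V : Finset ℝ) (hV : (V.card : ℝ) ≤ 2 * R / ε) (hval : ∀ f ∈ F, ∀ x, f x ∈ V)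
    (ρ : (Fin k → X × ℝ) → (X → ℝ))
    (hcomp : ∀ X₀ : Finset X, X₀.Nonempty → ∀ f ∈ F, ∃ T : Fin k → X × ℝ,
      (∀ i, (T i).1 ∈ X₀ ∧ (T i).2 = f ((T i).1)) ∧ ∀ x ∈ X₀, |ρ T x - f x| ≤ γ)
    (n : ℕ) (hn : 0 < n) (S : Finset X) (hS : S.card = n) :
    ∃ G : Finset (X → ℝ), (G.card : ℝ) ≤ (2 * R * n / ε) ^ k ∧
      ∀ f ∈ F, ∃ g ∈ G, ∀ x ∈ S, |f x - g x| ≤ γ := by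
  classical
  refine ⟨(Fintype.piFinset (fun _ : Fin k => S ×ˢ V)).image ρ, ?_, ?_⟩
  · calc ((Fintype.piFinset (fun _ : Fin k => S ×ˢ V)).image ρ).card
        ≤ ((Fintype.piFinset (fun _ : Fin k => S ×ˢ V)).card : ℝ) := by
          exact_mod_cast Finset.card_image_le
      _ = ((S.card * V.card : ℕ) : ℝ) ^ k := by
          rw [Fintype.card_piFinset]
          push_cast [Finset.card_product]
          simp [Finset.prod_const]
      _ ≤ (2 * R * n / ε) ^ k := by
          apply pow_le_pow_left₀ (by positivity)
          push_cast
          rw [hS]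
          rw [div_eq_mul_inv] at hV ⊢
          calc (n : ℝ) * V.card ≤ (n : ℝ) * (2 * R * ε⁻¹) := by
                apply mul_le_mul_of_nonneg_left hV (by positivity)
            _ = 2 * R * n * ε⁻¹ := by ring
  · intro f hf
    have hSne : S.Nonempty := Finset.card_pos.mp (hS ▸ hn)
    obtain ⟨T, hT1, hT2⟩ := hcomp S hSne f hf
    refine ⟨ρ T, Finset.mem_image_of_mem ρ ?_, fun x hx => ?_⟩
    · rw [Fintype.mem_piFinset]
      intro i
      rw [Finset.mem_product]
      exact ⟨(hT1 i).1, (hT1 i).2 ▸ hval f hf _⟩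
    · rw [abs_sub_comm]; exact hT2 x hx
end

section
/- Let F ⊆ [0,1]^X with γ⋆ = inf{γ : fat_γ(F) < ∞} > 0. Let X₁,…,Xₙ be pairwise disjoint finite subsets of X such that their union is γ⁻-fat-shattered at a common threshold, and such that the uniform distributions Pᵢ on Xᵢ satisfy |E_{Pᵢ}[f] − E_{Pⱼ}[f]| ≤ γ⁺ for all i, j and all f ∈ F. Then for any probability vectors α, β on [n], writing P_α = Σᵢ αᵢ Pᵢ and P_β = Σᵢ βᵢ Pᵢ, the IPM satisfies γ⁻ · TV(α, β) ≤ d_F(P_α, P_β) ≤ γ⁺ · TV(α, β), where TV(α, β) = (1/2)Σᵢ|αᵢ − βᵢ|. -/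
lemma halfabs (x : ℝ) : max x 0 = (|x| + x) / 2 := by
  rcases le_total x 0 with h | h
  · rw [max_eq_right h, abs_of_nonpos h]; ring
  · rw [max_eq_left h, abs_of_nonneg h]; ring

lemma sum_pairwise_close_bound {n : ℕ} (hn : Nonempty (Fin n)) (γp : ℝ)
    (a E : Fin n → ℝ) (hsum : ∑ i, a i = 0)
    (hE : ∀ i j, |E i - E j| ≤ γp) :
    ∑ i, a i * E i ≤ γp * ((1/2) * ∑ i, |a i|) := by
  obtain ⟨i₀, -, hmin⟩ := Finset.exists_min_image Finset.univ E ⟨hn.some, Finset.mem_univ _⟩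
  have key : ∑ i, a i * E i = ∑ i, a i * (E i - E i₀) := by
    simp [mul_sub, Finset.sum_sub_distrib, ← Finset.sum_mul, hsum]
  have hterm : ∀ i ∈ Finset.univ, a i * (E i - E i₀) ≤ γp * max (a i) 0 := by
    intro i _
    have h1 : E i₀ ≤ E i := hmin i (Finset.mem_univ i)
    have h2 : E i - E i₀ ≤ γp := (abs_le.mp (hE i i₀)).2
    rcases le_total (a i) 0 with h | h
    · rw [max_eq_right h]; nlinarith
    · rw [max_eq_left h]; nlinarith
  have hmax : ∑ i, max (a i) 0 = (1/2) * ∑ i, |a i| := by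
    calc ∑ i, max (a i) 0 = ∑ i, (|a i| + a i) / 2 := by simp only [halfabs]
    _ = (∑ i, |a i| + ∑ i, a i) / 2 := by rw [← Finset.sum_add_distrib, Finset.sum_div]
    _ = (1/2) * ∑ i, |a i| := by rw [hsum]; ring
  calc ∑ i, a i * E i = ∑ i, a i * (E i - E i₀) := key
    _ ≤ ∑ i, γp * max (a i) 0 := Finset.sum_le_sum hterm
    _ = γp * ∑ i, max (a i) 0 := by rw [Finset.mul_sum]
    _ = γp * ((1/2) * ∑ i, |a i|) := by rw [hmax]


/-- Mixtures over disjoint fat-shattered batches: if the batches `Xb i` are disjoint,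
their union is γ⁻-fat-shattered at a common threshold, and all batch means of every
`f ∈ F` are pairwise within γ⁺, then for mixtures `P_α, P_β` of the uniform batch
distributions, `γ⁻ · TV(α,β) ≤ d_F(P_α,P_β) ≤ γ⁺ · TV(α,β)`. -/
theorem ipm_mixture_tv_comparison {X : Type*} (F : Set (X → ℝ))
    (hF : ∀ f ∈ F, ∀ x, f x ∈ Set.Icc (0:ℝ) 1)
    (hstar : 0 < sInf {γ : ℝ | 0 < γ ∧ FatFinite F γ})
    (γm γp : ℝ) (n : ℕ) (Xb : Fin n → Finset X)
    (hne : ∀ i, (Xb i).Nonempty)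
    (hdisj : ∀ i j, i ≠ j → Disjoint (Xb i) (Xb j))
    (r : ℝ)
    (hsh : ∀ b : X → Bool, ∃ f ∈ F, ∀ i : Fin n, ∀ x ∈ Xb i,
      (b x = true → f x ≥ r + γm / 2) ∧ (b x = false → f x ≤ r - γm / 2))
    (hclose : ∀ i j : Fin n, ∀ f ∈ F,
      |(∑ x ∈ Xb i, f x) / ((Xb i).card : ℝ) - (∑ x ∈ Xb j, f x) / ((Xb j).card : ℝ)| ≤ γp)
    (α β : Fin n → ℝ) (hα : ∀ i, 0 ≤ α i) (hβ : ∀ i, 0 ≤ β i)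
    (hαs : ∑ i, α i = 1) (hβs : ∑ i, β i = 1) :
    γm * ((1/2) * ∑ i, |α i - β i|) ≤
        (⨆ f : F, |∑ i, (α i - β i) * ((∑ x ∈ Xb i, (f : X → ℝ) x) / ((Xb i).card : ℝ))|) ∧
      (⨆ f : F, |∑ i, (α i - β i) * ((∑ x ∈ Xb i, (f : X → ℝ) x) / ((Xb i).card : ℝ))|) ≤
        γp * ((1/2) * ∑ i, |α i - β i|) := by
  classical
  set E : (X → ℝ) → Fin n → ℝ := fun f i => (∑ x ∈ Xb i, f x) / ((Xb i).card : ℝ) with hE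
  set a : Fin n → ℝ := fun i => α i - β i with ha
  have hnn : n ≠ 0 := by rintro rfl; simp at hαs
  have hn : Nonempty (Fin n) := ⟨⟨0, Nat.pos_of_ne_zero hnn⟩⟩
  have hasum : ∑ i, a i = 0 := by simp [ha, Finset.sum_sub_distrib, hαs, hβs]
  have hcard : ∀ i, (0:ℝ) < ((Xb i).card : ℝ) := fun i => by
    exact_mod_cast (hne i).card_pos
  -- mean bounds
  have hml : ∀ (g : X → ℝ) (i : Fin n) (c : ℝ), (∀ x ∈ Xb i, c ≤ g x) → c ≤ E g i := by
    intro g i c h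
    rw [hE]
    rw [le_div_iff₀ (hcard i)]
    calc c * ((Xb i).card : ℝ) = ∑ _x ∈ Xb i, c := by
          rw [Finset.sum_const, nsmul_eq_mul]; ring
      _ ≤ ∑ x ∈ Xb i, g x := Finset.sum_le_sum h
  have hmu : ∀ (g : X → ℝ) (i : Fin n) (c : ℝ), (∀ x ∈ Xb i, g x ≤ c) → E g i ≤ c := by
    intro g i c h
    rw [hE]
    rw [div_le_iff₀ (hcard i)]
    calc ∑ x ∈ Xb i, g x ≤ ∑ _x ∈ Xb i, c := Finset.sum_le_sum h
      _ = c * ((Xb i).card : ℝ) := by rw [Finset.sum_const, nsmul_eq_mul]; ring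
  have hE01 : ∀ f ∈ F, ∀ i, 0 ≤ E f i ∧ E f i ≤ 1 := by
    intro f hf i
    exact ⟨hml f i 0 (fun x _ => (hF f hf x).1), hmu f i 1 (fun x _ => (hF f hf x).2)⟩
  obtain ⟨f0, hf0F, -⟩ := hsh (fun _ => true)
  haveI : Nonempty F := ⟨⟨f0, hf0F⟩⟩
  have hbdd : BddAbove (Set.range fun f : F => |∑ i, a i * E (f : X → ℝ) i|) := by
    refine ⟨∑ i, |a i|, ?_⟩
    rintro _ ⟨f, rfl⟩
    calc |∑ i, a i * E (f : X → ℝ) i| ≤ ∑ i, |a i * E (f : X → ℝ) i| :=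
          Finset.abs_sum_le_sum_abs _ _
      _ ≤ ∑ i, |a i| := Finset.sum_le_sum (fun i _ => by
          rw [abs_mul]
          have h1 := (hE01 f f.2 i).1
          have h2 := (hE01 f f.2 i).2
          calc |a i| * |E (f : X → ℝ) i| ≤ |a i| * 1 := by
                refine mul_le_mul_of_nonneg_left ?_ (abs_nonneg _)
                rw [abs_of_nonneg h1]; exact h2
            _ = |a i| := mul_one _)
  constructor
  · -- lower bound
    set b : X → Bool := fun x => if ∃ i, β i ≤ α i ∧ x ∈ Xb i then true else false with hb
    obtain ⟨f, hfF, hf⟩ := hsh b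
    have hterm : ∀ i ∈ Finset.univ, |a i| * (γm / 2) ≤ a i * (E f i - r) := by
      intro i _
      rcases le_or_gt (β i) (α i) with h | h
      · have hfl : ∀ x ∈ Xb i, r + γm / 2 ≤ f x := by
          intro x hx
          refine (hf i x hx).1 ?_
          show (if ∃ j, β j ≤ α j ∧ x ∈ Xb j then true else false) = true
          exact if_pos ⟨i, h, hx⟩
        have hmean := hml f i (r + γm / 2) hfl
        have habs : |a i| = a i := abs_of_nonneg (by simp [ha]; linarith)
        rw [habs]
        have : a i ≥ 0 := by simp [ha]; linarith
        nlinarith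
      · have hfl : ∀ x ∈ Xb i, f x ≤ r - γm / 2 := by
          intro x hx
          refine (hf i x hx).2 ?_
          show (if ∃ j, β j ≤ α j ∧ x ∈ Xb j then true else false) = false
          refine if_neg ?_
          rintro ⟨j, hj, hxj⟩
          rcases eq_or_ne j i with rfl | hji
          · exact absurd hj (not_le.mpr h)
          · exact (Finset.disjoint_left.mp (hdisj j i hji)) hxj hx
        have hmean := hmu f i (r - γm / 2) hfl
        have habs : |a i| = -(a i) := abs_of_nonpos (by simp [ha]; linarith)
        rw [habs]
        have : a i ≤ 0 := by simp [ha]; linarith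
        nlinarith
    have hsum : γm * ((1/2) * ∑ i, |a i|) ≤ ∑ i, a i * E f i := by
      have e1 : ∑ i, a i * (E f i - r) = ∑ i, a i * E f i := by
        simp [mul_sub, Finset.sum_sub_distrib, ← Finset.sum_mul, hasum]
      calc γm * ((1/2) * ∑ i, |a i|) = ∑ i, |a i| * (γm / 2) := by
            rw [← Finset.sum_mul]; ring
        _ ≤ ∑ i, a i * (E f i - r) := Finset.sum_le_sum hterm
        _ = ∑ i, a i * E f i := e1
    calc γm * ((1/2) * ∑ i, |a i|) ≤ ∑ i, a i * E f i := hsum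
      _ ≤ |∑ i, a i * E f i| := le_abs_self _
      _ ≤ ⨆ g : F, |∑ i, a i * E (g : X → ℝ) i| := le_ciSup hbdd ⟨f, hfF⟩
  · -- upper bound
    refine ciSup_le fun f => ?_
    rw [abs_le]
    constructor
    · have := sum_pairwise_close_bound hn γp (fun i => -(a i)) (E f)
        (by simp [hasum]) (fun i j => hclose i j f f.2)
      simp only [neg_mul, Finset.sum_neg_distrib, abs_neg] at this
      linarith
    · exact sum_pairwise_close_bound hn γp a (E f) hasum (fun i j => hclose i j f f.2)
end
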